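/- Let (Ω, F, μ) be a probability space, let R : Ω → ℝ be integrable, set ε := R − E[R], and suppose ε = ε_s + ε_l for random variables ε_s, ε_l with ε_s · ε_l = 0 almost everywhere. Let g₀, g₁, g₂, g₃ ∈ ℝ define the pricing kernel M := g₀ + g₁·ε + g₂·ε² + g₃·ε³, and assume ε_s^n and ε_l^n for n ∈ {2, 3, 4}, ε^n for n ∈ {1, 2, 3, 4}, R·ε^n for n ∈ {1, 2, 3}, and R·M are integrable, that E[R·M] = 1, and that E[M] ≠ 0. Set R_f := 1 / E[M] and θ_n := −g_n · R_f. Assume moreover that v_h := E[ε_h²] > 0 for h ∈ {s, l}, and define the horizon-specific skewness s_h := E[ε_h³] / v_h^{3/2}, kurtosis k_h := E[ε_h⁴] / v_h², and coefficients β_h := θ₁·v_h^{1/2}, δ_h := θ₂·v_h^{3/2}, K_h := θ₃·v_h². Then E[R] − R_f = Σ_{h ∈ {s, l}} ( β_h·√(v_h) + δ_h·s_h + K_h·k_h ). -/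

import Mathlib

/-!
Since `R = E[R] + ε` and `E[ε] = 0`, the Euler equation reads
`1 = E[R]·E[M] + g₁·E[ε²] + g₂·E[ε³] + g₃·E[ε⁴]`, so `E[R] - R_f = θ₁·E[ε²] + θ₂·E[ε³] + θ₃·E[ε⁴]`.
Because `ε_s·ε_l = 0`, every moment `E[εⁿ]` (`n ≥ 1`) splits as `E[ε_sⁿ] + E[ε_lⁿ]`, and the
horizon coefficients are normalized exactly so that `β_h·√v_h + δ_h·s_h + K_h·k_h` equals
`θ₁·v_h + θ₂·E[ε_h³] + θ₃·E[ε_h⁴]`.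
-/

open MeasureTheory ProbabilityTheory

theorem add_pow_of_mul_eq_zero {R : Type*} [CommRing R] {x y : R} (h : x * y = 0) :
    ∀ {n : ℕ}, n ≠ 0 → (x + y) ^ n = x ^ n + y ^ n
  | 1, _ => by simp
  | n + 2, _ => by
    rw [pow_succ, add_pow_of_mul_eq_zero h (n := n + 1) (by omega)]
    linear_combination (x ^ n + y ^ n) * h

theorem vol_skew_kurt_terms_eq {v θ₁ θ₂ θ₃ m₃ m₄ : ℝ} (hv : 0 < v) :
    θ₁ * v ^ ((1 : ℝ) / 2) * √v + θ₂ * v ^ ((3 : ℝ) / 2) * (m₃ / v ^ ((3 : ℝ) / 2)) +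
      θ₃ * v ^ 2 * (m₄ / v ^ 2) = θ₁ * v + θ₂ * m₃ + θ₃ * m₄ := by
  have h32 : v ^ ((3 : ℝ) / 2) ≠ 0 := (Real.rpow_pos_of_pos hv _).ne'
  rw [← Real.sqrt_eq_rpow, mul_assoc θ₁, Real.mul_self_sqrt hv.le]
  field_simp

section

variable {Ω : Type*} {mΩ : MeasurableSpace Ω} {μ : Measure Ω}

theorem integral_add_pow_of_mul_eq_zero {X Y : Ω → ℝ} (hXY : ∀ᵐ ω ∂μ, X ω * Y ω = 0) {n : ℕ}
    (hn : n ≠ 0) (hX : Integrable (fun ω => X ω ^ n) μ) (hY : Integrable (fun ω => Y ω ^ n) μ) :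
    ∫ ω, (X ω + Y ω) ^ n ∂μ = ∫ ω, X ω ^ n ∂μ + ∫ ω, Y ω ^ n ∂μ := by
  rw [← integral_add hX hY]
  exact integral_congr_ae (hXY.mono fun ω h => add_pow_of_mul_eq_zero h hn)

theorem integral_moment_combination {X : Ω → ℝ} (h1 : Integrable X μ)
    (h2 : Integrable (fun ω => X ω ^ 2) μ) (h3 : Integrable (fun ω => X ω ^ 3) μ)
    (h4 : Integrable (fun ω => X ω ^ 4) μ) (g₀ g₁ g₂ g₃ : ℝ) :
    ∫ ω, (g₀ * X ω + g₁ * X ω ^ 2 + g₂ * X ω ^ 3 + g₃ * X ω ^ 4) ∂μ =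
      g₀ * ∫ ω, X ω ∂μ + g₁ * ∫ ω, X ω ^ 2 ∂μ + g₂ * ∫ ω, X ω ^ 3 ∂μ
        + g₃ * ∫ ω, X ω ^ 4 ∂μ := by
  rw [integral_add (by fun_prop) (by fun_prop), integral_add (by fun_prop) (by fun_prop),
    integral_add (by fun_prop) (by fun_prop)]
  simp only [integral_const_mul]

theorem integral_sub_inv_integral_eq_of_euler [IsProbabilityMeasure μ] {R ε M : Ω → ℝ}
    {g₀ g₁ g₂ g₃ : ℝ} (hε : ∀ ω, ε ω = R ω - ∫ x, R x ∂μ)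
    (hMdef : ∀ ω, M ω = g₀ + g₁ * ε ω + g₂ * ε ω ^ 2 + g₃ * ε ω ^ 3)
    (hεpow : ∀ n, 1 ≤ n → n ≤ 4 → Integrable (fun ω => ε ω ^ n) μ)
    (hEuler : ∫ ω, R ω * M ω ∂μ = 1) (hEM : (∫ ω, M ω ∂μ) ≠ 0) :
    (∫ ω, R ω ∂μ) - 1 / ∫ ω, M ω ∂μ =
      -g₁ * (1 / ∫ ω, M ω ∂μ) * ∫ ω, ε ω ^ 2 ∂μ + -g₂ * (1 / ∫ ω, M ω ∂μ) * ∫ ω, ε ω ^ 3 ∂μ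
        + -g₃ * (1 / ∫ ω, M ω ∂μ) * ∫ ω, ε ω ^ 4 ∂μ := by
  have h1 : Integrable ε μ := by simpa using hεpow 1 le_rfl (by norm_num)
  have h2 := hεpow 2 (by norm_num) (by norm_num)
  have h3 := hεpow 3 (by norm_num) (by norm_num)
  have h4 := hεpow 4 (by norm_num) le_rfl
  have hmean : ∫ ω, ε ω ∂μ = 0 := by
    simpa [centralMoment, ← hε] using centralMoment_one (X := R) (μ := μ)
  have hMint : Integrable M μ := by rw [funext hMdef]; fun_prop
  have hRM : (fun ω => R ω * M ω) = fun ω =>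
      (∫ x, R x ∂μ) * M ω + (g₀ * ε ω + g₁ * ε ω ^ 2 + g₂ * ε ω ^ 3 + g₃ * ε ω ^ 4) := by
    ext ω; rw [hMdef, hε]; ring
  rw [hRM, integral_add (hMint.const_mul _) (by fun_prop), integral_const_mul,
    integral_moment_combination h1 h2 h3 h4, hmean] at hEuler
  field_simp
  linear_combination hEuler

end

theorem pricing_higher_moments_vol_skew_kurt_form_general
    {Ω : Type*} {mΩ : MeasurableSpace Ω} {μ : Measure Ω} [IsProbabilityMeasure μ]
    (R : Ω → ℝ)
    (ε εs εl : Ω → ℝ)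
    (hε : ∀ ω, ε ω = R ω - ∫ x, R x ∂μ)
    (hsplit : ∀ ω, ε ω = εs ω + εl ω)
    (horth : ∀ᵐ ω ∂μ, εs ω * εl ω = 0)
    (M : Ω → ℝ) (g₀ g₁ g₂ g₃ : ℝ)
    (hMdef : ∀ ω, M ω = g₀ + g₁ * ε ω + g₂ * ε ω ^ 2 + g₃ * ε ω ^ 3)
    (hspow : ∀ n, 2 ≤ n → n ≤ 4 → Integrable (fun ω => εs ω ^ n) μ)
    (hlpow : ∀ n, 2 ≤ n → n ≤ 4 → Integrable (fun ω => εl ω ^ n) μ)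
    (hεpow : ∀ n, 1 ≤ n → n ≤ 4 → Integrable (fun ω => ε ω ^ n) μ)
    (hEuler : ∫ ω, R ω * M ω ∂μ = 1)
    (hEM : (∫ ω, M ω ∂μ) ≠ 0)
    (Rf θ₁ θ₂ θ₃ : ℝ)
    (hRf : Rf = 1 / ∫ ω, M ω ∂μ)
    (hθ₁ : θ₁ = -g₁ * Rf) (hθ₂ : θ₂ = -g₂ * Rf) (hθ₃ : θ₃ = -g₃ * Rf)
    (vs vl : ℝ)
    (hvs : vs = ∫ ω, εs ω ^ 2 ∂μ) (hvl : vl = ∫ ω, εl ω ^ 2 ∂μ)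
    (hvs_pos : 0 < vs) (hvl_pos : 0 < vl)
    (ss sl ks kl βs βl δs δl Ks Kl : ℝ)
    (hss : ss = (∫ ω, εs ω ^ 3 ∂μ) / vs ^ ((3 : ℝ) / 2))
    (hsl : sl = (∫ ω, εl ω ^ 3 ∂μ) / vl ^ ((3 : ℝ) / 2))
    (hks : ks = (∫ ω, εs ω ^ 4 ∂μ) / vs ^ 2)
    (hkl : kl = (∫ ω, εl ω ^ 4 ∂μ) / vl ^ 2)
    (hβs : βs = θ₁ * vs ^ ((1 : ℝ) / 2)) (hβl : βl = θ₁ * vl ^ ((1 : ℝ) / 2))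
    (hδs : δs = θ₂ * vs ^ ((3 : ℝ) / 2)) (hδl : δl = θ₂ * vl ^ ((3 : ℝ) / 2))
    (hKs : Ks = θ₃ * vs ^ 2) (hKl : Kl = θ₃ * vl ^ 2) :
    (∫ ω, R ω ∂μ) - Rf =
      (βs * Real.sqrt vs + δs * ss + Ks * ks) +
      (βl * Real.sqrt vl + δl * sl + Kl * kl) := by
  have hmoments := integral_sub_inv_integral_eq_of_euler hε hMdef hεpow hEuler hEM
  have hsplit_moment : ∀ n, 2 ≤ n → n ≤ 4 →
      ∫ ω, ε ω ^ n ∂μ = (∫ ω, εs ω ^ n ∂μ) + ∫ ω, εl ω ^ n ∂μ := fun n h2 h4 => by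
    simp only [hsplit]
    exact integral_add_pow_of_mul_eq_zero horth (by omega) (hspow n h2 h4) (hlpow n h2 h4)
  subst hβs hβl hδs hδl hKs hKl hss hsl hks hkl
  rw [vol_skew_kurt_terms_eq hvs_pos, vol_skew_kurt_terms_eq hvl_pos, hθ₁, hθ₂, hθ₃, hRf, hmoments,
    hsplit_moment 2 le_rfl (by norm_num), hsplit_moment 3 (by norm_num) (by norm_num),
    hsplit_moment 4 (by norm_num) le_rfl, ← hvs, ← hvl]
  ring

/-- **Equation (rt_final): Proposition 1 in volatility/skewness/kurtosis form.**
With the orthogonal horizon decomposition `ε = ε_s + ε_l` of the demeaned return,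
the cubic pricing kernel, the Euler equation, `R_f = 1/E[M]`, `θ_n = −g_n·R_f`,
positive horizon variances `v_h = E[ε_h²]`, skewness `s_h = E[ε_h³]/v_h^(3/2)`,
kurtosis `k_h = E[ε_h⁴]/v_h²`, and coefficients `β_h = θ₁·v_h^(1/2)`,
`δ_h = θ₂·v_h^(3/2)`, `K_h = θ₃·v_h²`, one has
`E[R] − R_f = Σ_{h ∈ {s,l}} (β_h·√v_h + δ_h·s_h + K_h·k_h)`. -/
theorem pricing_higher_moments_vol_skew_kurt_form
    {Ω : Type*} {mΩ : MeasurableSpace Ω} {μ : Measure Ω} [IsProbabilityMeasure μ]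
    (R : Ω → ℝ) (hR : Integrable R μ)
    (ε εs εl : Ω → ℝ)
    (hε : ∀ ω, ε ω = R ω - ∫ x, R x ∂μ)
    (hsplit : ∀ ω, ε ω = εs ω + εl ω)
    (horth : ∀ᵐ ω ∂μ, εs ω * εl ω = 0)
    (M : Ω → ℝ) (g₀ g₁ g₂ g₃ : ℝ)
    (hMdef : ∀ ω, M ω = g₀ + g₁ * ε ω + g₂ * ε ω ^ 2 + g₃ * ε ω ^ 3)
    (hspow : ∀ n, 2 ≤ n → n ≤ 4 → Integrable (fun ω => εs ω ^ n) μ)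
    (hlpow : ∀ n, 2 ≤ n → n ≤ 4 → Integrable (fun ω => εl ω ^ n) μ)
    (hεpow : ∀ n, 1 ≤ n → n ≤ 4 → Integrable (fun ω => ε ω ^ n) μ)
    (hRεpow : ∀ n, 1 ≤ n → n ≤ 3 → Integrable (fun ω => R ω * ε ω ^ n) μ)
    (hRM : Integrable (fun ω => R ω * M ω) μ)
    (hEuler : ∫ ω, R ω * M ω ∂μ = 1)
    (hEM : (∫ ω, M ω ∂μ) ≠ 0)
    (Rf θ₁ θ₂ θ₃ : ℝ)
    (hRf : Rf = 1 / ∫ ω, M ω ∂μ)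
    (hθ₁ : θ₁ = -g₁ * Rf) (hθ₂ : θ₂ = -g₂ * Rf) (hθ₃ : θ₃ = -g₃ * Rf)
    (vs vl : ℝ)
    (hvs : vs = ∫ ω, εs ω ^ 2 ∂μ) (hvl : vl = ∫ ω, εl ω ^ 2 ∂μ)
    (hvs_pos : 0 < vs) (hvl_pos : 0 < vl)
    (ss sl ks kl βs βl δs δl Ks Kl : ℝ)
    (hss : ss = (∫ ω, εs ω ^ 3 ∂μ) / vs ^ ((3 : ℝ) / 2))
    (hsl : sl = (∫ ω, εl ω ^ 3 ∂μ) / vl ^ ((3 : ℝ) / 2))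
    (hks : ks = (∫ ω, εs ω ^ 4 ∂μ) / vs ^ 2)
    (hkl : kl = (∫ ω, εl ω ^ 4 ∂μ) / vl ^ 2)
    (hβs : βs = θ₁ * vs ^ ((1 : ℝ) / 2)) (hβl : βl = θ₁ * vl ^ ((1 : ℝ) / 2))
    (hδs : δs = θ₂ * vs ^ ((3 : ℝ) / 2)) (hδl : δl = θ₂ * vl ^ ((3 : ℝ) / 2))
    (hKs : Ks = θ₃ * vs ^ 2) (hKl : Kl = θ₃ * vl ^ 2) :
    (∫ ω, R ω ∂μ) - Rf =
      (βs * Real.sqrt vs + δs * ss + Ks * ks) +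
      (βl * Real.sqrt vl + δl * sl + Kl * kl) :=
  pricing_higher_moments_vol_skew_kurt_form_general (mΩ := mΩ) R ε εs εl hε hsplit horth M g₀ g₁ g₂
    g₃ hMdef hspow hlpow hεpow hEuler hEM Rf θ₁ θ₂ θ₃ hRf hθ₁ hθ₂ hθ₃ vs vl hvs hvl hvs_pos hvl_pos
    ss sl ks kl βs βl δs δl Ks Kl hss hsl hks hkl hβs hβl hδs hδl hKs hKl
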